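/- arXiv:0903.5535 — 5 statements merged into one kernel-verified Lean document; each statement's English description precedes it below -/
import Mathlib

section
/- Let Q, U, W be nonempty finite sets, f : Q × U × W → Q a transition function, and σ : Q × U × W → ℝ a cost function. The following three statements are equivalent: (a) there exists a state feedback law φ : Q → U such that for every initial state q(0) ∈ Q and every input sequence w : ℕ → W, the closed-loop trajectory defined by q(t+1) = f(q(t), φ(q(t)), w(t)) satisfies inf_{T ≥ 0} Σ_{t=0}^{T} σ(q(t), φ(q(t)), w(t)) > −∞; (b) there exists a function J : Q → ℝ with J(q) ≥ 0 for all q and J(q) ≥ 𝕋(J)(q) for all q ∈ Q; (c) the value iteration sequence J₀ = 0, J_{k+1} = max{0, 𝕋(J_k)} (pointwise maximum with the zero function) converges pointwise on Q. -/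
open Finset Filter

/-- Dynamic programming operator:
`𝕋(J)(q) = min_{u ∈ U} max_{w ∈ W} ( -σ(q,u,w) + J(f(q,u,w)) )`. -/
noncomputable def dpOp {Q U W : Type*} [Fintype U] [Nonempty U] [Fintype W] [Nonempty W]
    (f : Q × U × W → Q) (σ : Q × U × W → ℝ) (J : Q → ℝ) : Q → ℝ :=
  fun q => univ.inf' univ_nonempty fun u : U =>
    univ.sup' univ_nonempty fun w : W => -σ (q, u, w) + J (f (q, u, w))

/-- Value iteration sequence: `J₀ = 0`, `J_{k+1} = max {0, 𝕋(J_k)}` (pointwise). -/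
noncomputable def valIter {Q U W : Type*} [Fintype U] [Nonempty U] [Fintype W] [Nonempty W]
    (f : Q × U × W → Q) (σ : Q × U × W → ℝ) : ℕ → Q → ℝ
  | 0 => fun _ => 0
  | k + 1 => fun q => max 0 (dpOp f σ (valIter f σ k) q)

/-!
If `J ≥ 0` and `𝕋 J ≤ J`, a feedback `φ` attaining the minimum in `𝕋 J` satisfies the dissipation
inequality `J (q (t+1)) - J (q t) ≤ σ (q t, φ (q t), w t)`, and telescoping bounds the cost of every
closed-loop run below by `-J (q 0)`. Value iteration is monotone and bounded by every such `J`,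
and any limit of it is a fixed point of `J ↦ max 0 (𝕋 J)`, so (b) and (c) are equivalent.

Conversely, given a stabilizing `φ`, the available storage `q ↦ sup_{w,T} -cost(q, w, T)` solves
(b) as soon as it is finite. Call a state bad if the cost from it is unbounded below. As `Q` is
finite, the cost from good states has a common lower bound, so from every bad state one can reach
another bad state at cost at most `-1`. Iterating and using the finiteness of `Q` again yields a
cycle of negative cost; repeating it forever gives an input sequence along which the cost is
unbounded below, contradicting (a).
-/

section DynamicProgramming

variable {Q U W : Type*} {f : Q × U × W → Q} {σ : Q × U × W → ℝ}

theorem sub_le_sum_of_dissipation {J : Q → ℝ} {φ : Q → U}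
    (hJ : ∀ q w, -σ (q, φ q, w) + J (f (q, φ q, w)) ≤ J q) {q : ℕ → Q} {w : ℕ → W}
    (hq : ∀ t, q (t + 1) = f (q t, φ (q t), w t)) (T : ℕ) :
    J (q T) - J (q 0) ≤ ∑ t ∈ range T, σ (q t, φ (q t), w t) := by
  rw [← sum_range_sub (fun t => J (q t))]
  refine sum_le_sum fun t _ => ?_
  have := hJ (q t) (w t)
  rw [hq t]
  linarith

variable [Fintype U] [Nonempty U] [Fintype W] [Nonempty W]

theorem dpOp_le_iff {J : Q → ℝ} {q : Q} {c : ℝ} :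
    dpOp f σ J q ≤ c ↔ ∃ u, ∀ w, -σ (q, u, w) + J (f (q, u, w)) ≤ c := by
  simp [dpOp, Finset.inf'_le_iff, Finset.sup'_le_iff]

theorem dpOp_mono : Monotone (dpOp f σ) := fun _ _ hJ _ =>
  inf'_mono_fun fun _ _ => sup'_mono_fun fun _ _ => (add_le_add_iff_left _).2 (hJ _)

theorem continuous_dpOp : Continuous (dpOp f σ) :=
  continuous_pi fun _ => Continuous.finset_inf'_apply _ fun _ _ =>
    Continuous.finset_sup'_apply _ fun _ _ => continuous_const.add (continuous_apply _)

theorem valIter_monotone : Monotone (valIter f σ) := by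
  refine monotone_nat_of_le_succ fun k => ?_
  induction k with
  | zero => exact fun _ => le_max_left _ _
  | succ k ih => exact fun q => max_le_max le_rfl (dpOp_mono ih q)

theorem valIter_le {J : Q → ℝ} (hJ₀ : ∀ q, 0 ≤ J q) (hJ : ∀ q, dpOp f σ J q ≤ J q) (k : ℕ) (q : Q) :
    valIter f σ k q ≤ J q := by
  induction k generalizing q with
  | zero => exact hJ₀ q
  | succ k ih => exact max_le (hJ₀ q) ((dpOp_mono ih q).trans (hJ q))

theorem eq_max_zero_dpOp_of_tendsto {J : Q → ℝ} (h : Tendsto (valIter f σ) atTop (nhds J))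
    (q : Q) : J q = max 0 (dpOp f σ J q) := by
  have hcont : Continuous fun J : Q → ℝ => fun q => max 0 (dpOp f σ J q) :=
    continuous_pi fun q => continuous_const.max ((continuous_apply q).comp continuous_dpOp)
  have hfix := tendsto_nhds_unique (h.comp (tendsto_add_atTop_nat 1)) ((hcont.tendsto J).comp h)
  exact congrFun hfix q

end DynamicProgramming

namespace ClosedLoop

variable {Q U W : Type*} (f : Q × U × W → Q) (σ : Q × U × W → ℝ) (φ : Q → U)

def traj (q : Q) (w : ℕ → W) : ℕ → Q
  | 0 => q
  | t + 1 => f (traj q w t, φ (traj q w t), w t)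

noncomputable def cost (q : Q) (w : ℕ → W) (T : ℕ) : ℝ :=
  ∑ t ∈ range T, σ (traj f φ q w t, φ (traj f φ q w t), w t)

def append (v : ℕ → W) (T : ℕ) (w : ℕ → W) : ℕ → W :=
  fun t => if t < T then v t else w (t - T)

variable {f φ}

theorem append_of_lt {v w : ℕ → W} {T t : ℕ} (ht : t < T) : append v T w t = v t :=
  if_pos ht

@[simp]
theorem append_add (v w : ℕ → W) (T t : ℕ) : append v T w (T + t) = w t := by
  simp [append]

theorem traj_congr {q : Q} {v w : ℕ → W} {T : ℕ} (h : ∀ t < T, v t = w t) :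
    traj f φ q v T = traj f φ q w T := by
  induction T with
  | zero => rfl
  | succ T ih =>
    simp only [traj, ih fun t ht => h t (ht.trans T.lt_succ_self), h T T.lt_succ_self]

theorem traj_add (q : Q) (w : ℕ → W) (T s : ℕ) :
    traj f φ q w (T + s) = traj f φ (traj f φ q w T) (fun t => w (T + t)) s := by
  induction s with
  | zero => rfl
  | succ s ih => rw [← Nat.add_assoc, traj, ih]; rfl

@[simp]
theorem cost_zero (q : Q) (w : ℕ → W) : cost f σ φ q w 0 = 0 := by
  simp [cost]

theorem cost_succ (q : Q) (w : ℕ → W) (T : ℕ) :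
    cost f σ φ q w (T + 1) = cost f σ φ q w T + σ (traj f φ q w T, φ (traj f φ q w T), w T) :=
  sum_range_succ _ _

theorem cost_congr {q : Q} {v w : ℕ → W} {T : ℕ} (h : ∀ t < T, v t = w t) :
    cost f σ φ q v T = cost f σ φ q w T := by
  refine sum_congr rfl fun t ht => ?_
  have ht : t < T := mem_range.mp ht
  rw [traj_congr fun s hs => h s (hs.trans ht), h t ht]

theorem cost_add (q : Q) (w : ℕ → W) (T s : ℕ) :
    cost f σ φ q w (T + s) =
      cost f σ φ q w T + cost f σ φ (traj f φ q w T) (fun t => w (T + t)) s := by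
  induction s with
  | zero => simp
  | succ s ih => rw [← Nat.add_assoc, cost_succ, ih, cost_succ, traj_add]; ring

theorem traj_append (q : Q) (v w : ℕ → W) (T s : ℕ) :
    traj f φ q (append v T w) (T + s) = traj f φ (traj f φ q v T) w s := by
  simp only [traj_add, append_add]
  rw [traj_congr fun t ht => append_of_lt ht]

theorem cost_append (q : Q) (v w : ℕ → W) (T s : ℕ) :
    cost f σ φ q (append v T w) (T + s) =
      cost f σ φ q v T + cost f σ φ (traj f φ q v T) w s := by
  simp only [cost_add, append_add]
  rw [cost_congr σ fun t ht => append_of_lt ht, traj_congr fun t ht => append_of_lt ht]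

theorem traj_periodic {p : Q} {v : ℕ → W} {L : ℕ} (hv : traj f φ p v L = p) (k : ℕ) :
    traj f φ p (fun t => v (t % L)) (k * L) = p := by
  induction k with
  | zero => simp [traj]
  | succ k ih =>
    rw [Nat.succ_mul, traj_add, ih]
    simp only [Nat.mul_add_mod_self_right]
    rwa [traj_congr fun t ht => congrArg v (Nat.mod_eq_of_lt ht)]

theorem cost_periodic {p : Q} {v : ℕ → W} {L : ℕ} (hv : traj f φ p v L = p) (k : ℕ) :
    cost f σ φ p (fun t => v (t % L)) (k * L) = k * cost f σ φ p v L := by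
  induction k with
  | zero => simp
  | succ k ih =>
    rw [Nat.succ_mul, cost_add, ih, traj_periodic hv]
    simp only [Nat.mul_add_mod_self_right]
    rw [cost_congr σ fun t ht => congrArg v (Nat.mod_eq_of_lt ht)]
    push_cast
    ring

theorem exists_forall_le_cost {q : Q} {w : ℕ → W}
    (h : ∃ C : ℝ, ∀ T, C ≤ cost f σ φ q w (T + 1)) : ∃ C : ℝ, ∀ T, C ≤ cost f σ φ q w T := by
  obtain ⟨C, hC⟩ := h
  refine ⟨min C 0, fun T => ?_⟩
  cases T with
  | zero => simp
  | succ T => exact (min_le_left _ _).trans (hC T)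

variable (f φ)

def CostBddBelow (q : Q) : Prop :=
  ∃ C : ℝ, ∀ (w : ℕ → W) (T : ℕ), C ≤ cost f σ φ q w T

theorem exists_forall_le_cost_of_costBddBelow [Finite Q] :
    ∃ m : ℝ, ∀ q, CostBddBelow f σ φ q → ∀ w T, m ≤ cost f σ φ q w T := by
  have hB : ∀ q, ∃ C : ℝ, CostBddBelow f σ φ q → ∀ w T, C ≤ cost f σ φ q w T := fun q => by
    by_cases hq : CostBddBelow f σ φ q
    · obtain ⟨C, hC⟩ := hq
      exact ⟨C, fun _ => hC⟩
    · exact ⟨0, fun h => absurd h hq⟩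
  choose B hB using hB
  obtain ⟨m, hm⟩ := (Set.finite_range B).bddBelow
  exact ⟨m, fun q hq w T => (hm ⟨q, rfl⟩).trans (hB q hq w T)⟩

/-- Take the last state of a run of very negative cost from which the cost is unbounded below:
past it the cost is uniformly bounded below, so the cost up to it is at most `-1`. -/
theorem exists_cost_le_neg_one [Finite Q] [Finite W] {q : Q} (hq : ¬CostBddBelow f σ φ q) :
    ∃ w T, cost f σ φ q w T ≤ -1 ∧ ¬CostBddBelow f σ φ (traj f φ q w T) := by
  classical
  obtain ⟨m, hm⟩ := exists_forall_le_cost_of_costBddBelow f σ φ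
  obtain ⟨M, hM⟩ := (Set.finite_range fun p : Q × W => -σ (p.1, φ p.1, p.2)).bddAbove
  obtain ⟨w, T, hT⟩ : ∃ w T, cost f σ φ q w T < min (m - M - 1) (-1) := by
    by_contra! h
    exact hq ⟨_, h⟩
  let P j := ¬CostBddBelow f σ φ (traj f φ q w j)
  set j := Nat.findGreatest P T
  have hj : P j := Nat.findGreatest_spec (Nat.zero_le T) hq
  refine ⟨w, j, ?_, hj⟩
  have hjT : j ≤ T := Nat.findGreatest_le T
  rcases hjT.eq_or_lt with hj_eq | hj_lt
  · rw [hj_eq]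
    exact hT.le.trans (min_le_right _ _)
  have hnext : CostBddBelow f σ φ (traj f φ q w (j + 1)) :=
    not_not.mp (Nat.findGreatest_is_greatest j.lt_succ_self hj_lt)
  have hsplit := cost_add (f := f) (φ := φ) σ q w (j + 1) (T - (j + 1))
  rw [Nat.add_sub_cancel' hj_lt, cost_succ] at hsplit
  have htail := hm _ hnext (fun t => w (j + 1 + t)) (T - (j + 1))
  have hstep := hM ⟨(traj f φ q w j, w j), rfl⟩
  linarith [min_le_left (m - M - 1) (-1)]

theorem exists_cycle_cost_neg [Finite Q] [Finite W] {q : Q} (hq : ¬CostBddBelow f σ φ q) :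
    ∃ p v L, traj f φ p v L = p ∧ cost f σ φ p v L < 0 := by
  let S := {q // ¬CostBddBelow f σ φ q}
  have hstep (s : S) : ∃ w T, cost f σ φ s w T ≤ -1 ∧ ¬CostBddBelow f σ φ (traj f φ s w T) :=
    exists_cost_le_neg_one f σ φ s.2
  choose w T hcost hbad using hstep
  let g : S → S := fun s => ⟨traj f φ s (w s) (T s), hbad s⟩
  have hiter (k : ℕ) : ∀ s : S, ∃ v L, cost f σ φ s v L ≤ -k ∧ traj f φ s v L = g^[k] s := by
    induction k with
    | zero => exact fun s => ⟨w s, 0, by simp, rfl⟩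
    | succ k ih =>
      intro s
      obtain ⟨v, L, hv, hL⟩ := ih (g s)
      refine ⟨append (w s) (T s) v, T s + L, ?_, ?_⟩
      · rw [cost_append]
        push_cast
        linarith [hcost s]
      · rw [traj_append, Function.iterate_succ_apply]
        exact hL
  obtain ⟨i, j, hij, hg⟩ := Finite.exists_ne_map_eq_of_infinite fun n => g^[n] ⟨q, hq⟩
  wlog hlt : i < j generalizing i j
  · exact this j i hij.symm hg.symm (hij.symm.lt_of_le (not_lt.mp hlt))
  obtain ⟨v, L, hv, hL⟩ := hiter (j - i) (g^[i] ⟨q, hq⟩)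
  refine ⟨g^[i] ⟨q, hq⟩, v, L, ?_, ?_⟩
  · rw [hL, ← Function.iterate_add_apply, Nat.sub_add_cancel hlt.le]
    exact congrArg Subtype.val hg.symm
  · have hji : (1 : ℝ) ≤ (j - i : ℕ) := by exact_mod_cast Nat.sub_pos_of_lt hlt
    linarith

theorem costBddBelow_of_forall [Finite Q] [Finite W]
    (h : ∀ q w, ∃ C : ℝ, ∀ T, C ≤ cost f σ φ q w T) (q : Q) : CostBddBelow f σ φ q := by
  by_contra hq
  obtain ⟨p, v, L, hcycle, hneg⟩ := exists_cycle_cost_neg f σ φ hq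
  obtain ⟨C, hC⟩ := h p fun t => v (t % L)
  obtain ⟨k, hk⟩ := exists_nat_gt (C / cost f σ φ p v L)
  have hkL := hC (k * L)
  rw [cost_periodic σ hcycle] at hkL
  rw [div_lt_iff_of_neg hneg] at hk
  linarith

noncomputable def storage (q : Q) : ℝ :=
  ⨆ p : (ℕ → W) × ℕ, -cost f σ φ q p.1 p.2

variable {f σ φ}

theorem le_storage {q : Q} (hq : CostBddBelow f σ φ q) (w : ℕ → W) (T : ℕ) :
    -cost f σ φ q w T ≤ storage f σ φ q := by
  obtain ⟨C, hC⟩ := hq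
  exact le_ciSup (f := fun p : (ℕ → W) × ℕ => -cost f σ φ q p.1 p.2)
    ⟨-C, Set.forall_mem_range.2 fun p => neg_le_neg (hC p.1 p.2)⟩ (w, T)

theorem storage_nonneg [Nonempty W] {q : Q} (hq : CostBddBelow f σ φ q) :
    0 ≤ storage f σ φ q := by
  simpa using le_storage hq (fun _ => Classical.arbitrary W) 0

theorem neg_add_storage_le [Nonempty W] {q : Q} (hq : CostBddBelow f σ φ q) (w₀ : W) :
    -σ (q, φ q, w₀) + storage f σ φ (f (q, φ q, w₀)) ≤ storage f σ φ q := by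
  rw [neg_add_le_iff_le_add]
  refine ciSup_le fun ⟨w, T⟩ => ?_
  have := le_storage hq (append (fun _ => w₀) 1 w) (1 + T)
  rw [cost_append, cost_succ, cost_zero] at this
  change -(0 + σ (q, φ q, w₀) + cost f σ φ (f (q, φ q, w₀)) w T) ≤ _ at this
  linarith

theorem dpOp_storage_le [Fintype U] [Nonempty U] [Fintype W] [Nonempty W]
    (h : ∀ q, CostBddBelow f σ φ q) (q : Q) : dpOp f σ (storage f σ φ) q ≤ storage f σ φ q :=
  dpOp_le_iff.mpr ⟨φ q, neg_add_storage_le (h q)⟩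

end ClosedLoop

theorem stmt_0_general {Q U W : Type*} [Fintype Q] [Fintype U] [Nonempty U]
    [Fintype W] [Nonempty W] (f : Q × U × W → Q) (σ : Q × U × W → ℝ) :
    List.TFAE [
      -- (a) existence of a stabilizing state feedback law
      (∃ φ : Q → U, ∀ q : ℕ → Q, ∀ w : ℕ → W,
        (∀ t : ℕ, q (t + 1) = f (q t, φ (q t), w t)) →
        ∃ C : ℝ, ∀ T : ℕ, C ≤ ∑ t ∈ Finset.range (T + 1), σ (q t, φ (q t), w t)),
      -- (b) existence of a nonnegative `J` with `J ≥ 𝕋(J)`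
      (∃ J : Q → ℝ, (∀ q : Q, 0 ≤ J q) ∧ (∀ q : Q, dpOp f σ J q ≤ J q)),
      -- (c) pointwise convergence of the value iteration sequence
      (∃ Jstar : Q → ℝ, ∀ q : Q,
        Tendsto (fun k => valIter f σ k q) atTop (nhds (Jstar q)))
    ] := by
  tfae_have 1 → 2 := by
    rintro ⟨φ, hφ⟩
    have hbdd := ClosedLoop.costBddBelow_of_forall f σ φ fun q w =>
      ClosedLoop.exists_forall_le_cost σ (hφ (ClosedLoop.traj f φ q w) w fun _ => rfl)
    exact ⟨_, fun q => ClosedLoop.storage_nonneg (hbdd q), ClosedLoop.dpOp_storage_le hbdd⟩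
  tfae_have 2 → 1 := by
    rintro ⟨J, hJ₀, hJ⟩
    choose φ hφ using fun q => dpOp_le_iff.mp (hJ q)
    refine ⟨φ, fun q w hq => ⟨-J (q 0), fun T => ?_⟩⟩
    linarith [sub_le_sum_of_dissipation hφ hq (T + 1), hJ₀ (q (T + 1))]
  tfae_have 2 → 3 := by
    rintro ⟨J, hJ₀, hJ⟩
    exact ⟨fun q => ⨆ k, valIter f σ k q, fun q => tendsto_atTop_ciSup
      (fun _ _ hkl => valIter_monotone hkl q)
      ⟨J q, Set.forall_mem_range.2 fun k => valIter_le hJ₀ hJ k q⟩⟩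
  tfae_have 3 → 2 := by
    rintro ⟨J, hJ⟩
    have hfix := eq_max_zero_dpOp_of_tendsto (tendsto_pi_nhds.mpr hJ)
    exact ⟨J, fun q => (le_max_left _ _).trans_eq (hfix q).symm,
      fun q => (le_max_right _ _).trans_eq (hfix q).symm⟩
  tfae_finish

theorem stmt_0 {Q U W : Type*} [Fintype Q] [Nonempty Q] [Fintype U] [Nonempty U]
    [Fintype W] [Nonempty W] (f : Q × U × W → Q) (σ : Q × U × W → ℝ) :
    List.TFAE [
      -- (a) existence of a stabilizing state feedback law
      (∃ φ : Q → U, ∀ q : ℕ → Q, ∀ w : ℕ → W,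
        (∀ t : ℕ, q (t + 1) = f (q t, φ (q t), w t)) →
        ∃ C : ℝ, ∀ T : ℕ, C ≤ ∑ t ∈ Finset.range (T + 1), σ (q t, φ (q t), w t)),
      -- (b) existence of a nonnegative `J` with `J ≥ 𝕋(J)`
      (∃ J : Q → ℝ, (∀ q : Q, 0 ≤ J q) ∧ (∀ q : Q, dpOp f σ J q ≤ J q)),
      -- (c) pointwise convergence of the value iteration sequence
      (∃ Jstar : Q → ℝ, ∀ q : Q,
        Tendsto (fun k => valIter f σ k q) atTop (nhds (Jstar q)))
    ] :=
  stmt_0_general f σ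
end

section
/- Let Q, U, W be nonempty finite sets, f : Q × U × W → Q, and σ : Q × U × W → ℝ. Suppose J : Q → ℝ satisfies J(q) ≥ 0 and J(q) ≥ 𝕋(J)(q) for all q ∈ Q. Define the feedback law φ : Q → U by choosing, for each q, φ(q) to be a minimizer of u ↦ max_{w ∈ W} ( −σ(q,u,w) + J(f(q,u,w)) ). Then for every initial state q(0) ∈ Q and every input sequence w : ℕ → W, the closed-loop trajectory q(t+1) = f(q(t), φ(q(t)), w(t)) satisfies inf_{T ≥ 0} Σ_{t=0}^{T} σ(q(t), φ(q(t)), w(t)) > −∞. -/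
open Finset

/-! Since `φ q` attains the minimum defining `𝕋(J)(q)` and `𝕋(J) ≤ J`, every closed-loop step
satisfies the dissipation inequality `J(q(t+1)) - J(q(t)) ≤ σ(q(t), φ(q(t)), w(t))`.
Telescoping, together with `J ≥ 0`, bounds all partial sums below by `-J(q(0))`. -/

theorem neg_le_sum_range_of_sub_le {α : Type*} [AddCommGroup α] [PartialOrder α]
    [IsOrderedAddMonoid α] {V a : ℕ → α} (hV : ∀ t, 0 ≤ V t)
    (h : ∀ t, V (t + 1) - V t ≤ a t) (n : ℕ) : -V 0 ≤ ∑ t ∈ range n, a t :=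
  calc -V 0 ≤ V n - V 0 := by simpa [sub_eq_add_neg] using hV n
    _ = ∑ t ∈ range n, (V (t + 1) - V t) := (sum_range_sub V n).symm
    _ ≤ ∑ t ∈ range n, a t := sum_le_sum fun t _ => h t

section DynamicProgramming

variable {Q U W : Type*} [Fintype U] [Nonempty U] [Fintype W] [Nonempty W]
  {f : Q × U × W → Q} {σ : Q × U × W → ℝ} {J : Q → ℝ}

theorem sup'_eq_dpOp_of_isMinimizer {φ : Q → U}
    (hφ : ∀ q : Q, ∀ u : U,
      (univ.sup' univ_nonempty fun w : W => -σ (q, φ q, w) + J (f (q, φ q, w))) ≤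
      (univ.sup' univ_nonempty fun w : W => -σ (q, u, w) + J (f (q, u, w)))) (q : Q) :
    (univ.sup' univ_nonempty fun w : W => -σ (q, φ q, w) + J (f (q, φ q, w))) =
      dpOp f σ J q :=
  le_antisymm (le_inf' _ _ fun u _ => hφ q u) (inf'_le _ (mem_univ (φ q)))

theorem sub_le_of_le_dpOp_of_dpOp_le {q : Q} {u : U}
    (hu : (univ.sup' univ_nonempty fun w : W => -σ (q, u, w) + J (f (q, u, w))) ≤
      dpOp f σ J q)
    (hJT : dpOp f σ J q ≤ J q) (w : W) : J (f (q, u, w)) - J q ≤ σ (q, u, w) := by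
  have := (le_sup' (fun w : W => -σ (q, u, w) + J (f (q, u, w))) (mem_univ w)).trans
    (hu.trans hJT)
  linarith

end DynamicProgramming

theorem stmt_1_general {Q U W : Type*} [Fintype U] [Nonempty U]
    [Fintype W] [Nonempty W] (f : Q × U × W → Q) (σ : Q × U × W → ℝ)
    (J : Q → ℝ) (hJ0 : ∀ q : Q, 0 ≤ J q) (hJT : ∀ q : Q, dpOp f σ J q ≤ J q)
    (φ : Q → U)
    -- φ(q) is a minimizer of  u ↦ max_{w ∈ W} ( -σ(q,u,w) + J(f(q,u,w)) )
    (hφ : ∀ q : Q, ∀ u : U,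
      (univ.sup' univ_nonempty fun w : W => -σ (q, φ q, w) + J (f (q, φ q, w))) ≤
      (univ.sup' univ_nonempty fun w : W => -σ (q, u, w) + J (f (q, u, w)))) :
    ∀ q : ℕ → Q, ∀ w : ℕ → W,
      (∀ t : ℕ, q (t + 1) = f (q t, φ (q t), w t)) →
      ∃ C : ℝ, ∀ T : ℕ, C ≤ ∑ t ∈ Finset.range (T + 1), σ (q t, φ (q t), w t) := by
  intro q w hq
  have hdissip : ∀ t, J (q (t + 1)) - J (q t) ≤ σ (q t, φ (q t), w t) := fun t => by
    rw [hq t]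
    exact sub_le_of_le_dpOp_of_dpOp_le (sup'_eq_dpOp_of_isMinimizer hφ (q t)).le
      (hJT (q t)) (w t)
  exact ⟨-J (q 0), fun T =>
    neg_le_sum_range_of_sub_le (V := J ∘ q) (fun t => hJ0 (q t)) hdissip (T + 1)⟩

theorem stmt_1 {Q U W : Type*} [Fintype Q] [Nonempty Q] [Fintype U] [Nonempty U]
    [Fintype W] [Nonempty W] (f : Q × U × W → Q) (σ : Q × U × W → ℝ)
    (J : Q → ℝ) (hJ0 : ∀ q : Q, 0 ≤ J q) (hJT : ∀ q : Q, dpOp f σ J q ≤ J q)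
    (φ : Q → U)
    -- φ(q) is a minimizer of  u ↦ max_{w ∈ W} ( -σ(q,u,w) + J(f(q,u,w)) )
    (hφ : ∀ q : Q, ∀ u : U,
      (univ.sup' univ_nonempty fun w : W => -σ (q, φ q, w) + J (f (q, φ q, w))) ≤
      (univ.sup' univ_nonempty fun w : W => -σ (q, u, w) + J (f (q, u, w)))) :
    ∀ q : ℕ → Q, ∀ w : ℕ → W,
      (∀ t : ℕ, q (t + 1) = f (q t, φ (q t), w t)) →
      ∃ C : ℝ, ∀ T : ℕ, C ≤ ∑ t ∈ Finset.range (T + 1), σ (q t, φ (q t), w t) :=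
  stmt_1_general f σ J hJ0 hJT φ hφ
end

section
/- Let Q, U, W be nonempty finite sets, f : Q × U × W → Q a transition function, and σ : Q × U × W → ℝ. The following two statements are equivalent: (a) for every pair of input sequences u : ℕ → U and w : ℕ → W and every initial state q(0) ∈ Q, the trajectory defined by q(t+1) = f(q(t), u(t), w(t)) satisfies inf_{T ≥ 0} Σ_{t=0}^{T} σ(q(t), u(t), w(t)) > −∞; (b) there exists a nonnegative function J : Q → ℝ such that J(f(q,u,w)) − J(q) ≤ σ(q,u,w) for all q ∈ Q, u ∈ U, and w ∈ W. -/
/-!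
(b) ⇒ (a) is telescoping: a partial sum of σ along a trajectory dominates
`J (q (T + 1)) - J (q 0) ≥ -J (q 0)`.

(a) ⇒ (b): take Willems' available storage, `J q` = supremum of minus the cost of finite runs
starting at `q`. Prepending one step to a run gives the dissipation inequality; the point is
that `J` is finite, i.e. run costs are bounded below uniformly. A cycle of negative cost,
repeated forever, would contradict (a). Without negative cycles, cut a run at its last return
to the initial state: it splits into a cycle, one step, and a run avoiding that state, so
induction on the set of states allowed bounds the cost by `-|Q| · ∑ |σ|`.
-/

open Finset

namespace TransitionSystem

variable {Q A : Type*}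

def IsRun (f : Q × A → Q) (x : ℕ → Q) (a : ℕ → A) : Prop :=
  ∀ t, x (t + 1) = f (x t, a t)

def runCost (σ : Q × A → ℝ) (x : ℕ → Q) (a : ℕ → A) (n : ℕ) : ℝ :=
  ∑ t ∈ range n, σ (x t, a t)

def CostBoundedBelow (f : Q × A → Q) (σ : Q × A → ℝ) : Prop :=
  ∀ x a, IsRun f x a → ∃ C, ∀ T, C ≤ runCost σ x a (T + 1)

variable {f : Q × A → Q} {σ : Q × A → ℝ} {x : ℕ → Q} {a : ℕ → A}

theorem exists_isRun (f : Q × A → Q) (q : Q) (a : ℕ → A) : ∃ x, x 0 = q ∧ IsRun f x a :=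
  ⟨fun t => Nat.rec q (fun t y => f (y, a t)) t, rfl, fun _ => rfl⟩

theorem IsRun.shift (h : IsRun f x a) (k : ℕ) :
    IsRun f (fun t => x (k + t)) (fun t => a (k + t)) :=
  fun t => h (k + t)

theorem IsRun.cons (h : IsRun f x a) {q : Q} (b : A) (hx : x 0 = f (q, b)) :
    IsRun f (fun | 0 => q | t + 1 => x t) (fun | 0 => b | t + 1 => a t)
  | 0 => hx
  | t + 1 => h t

theorem IsRun.mod (h : IsRun f x a) {n : ℕ} (hn : 0 < n) (hcycle : x n = x 0) :
    IsRun f (fun t => x (t % n)) (fun t => a (t % n)) := by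
  intro t
  have hwrap : x ((t % n + 1) % n) = x (t % n + 1) := by
    have hle : t % n + 1 ≤ n := Nat.mod_lt t hn
    rcases hle.lt_or_eq with hlt | heq
    · rw [Nat.mod_eq_of_lt hlt]
    · rw [heq, Nat.mod_self, hcycle]
  simp only [← Nat.mod_add_mod t n 1, hwrap, h (t % n)]

theorem runCost_add (σ : Q × A → ℝ) (x : ℕ → Q) (a : ℕ → A) (m n : ℕ) :
    runCost σ x a (m + n) =
      runCost σ x a m + runCost σ (fun t => x (m + t)) (fun t => a (m + t)) n :=
  sum_range_add _ _ _

theorem runCost_cons (σ : Q × A → ℝ) (x : ℕ → Q) (a : ℕ → A) (q : Q) (b : A) (n : ℕ) :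
    runCost σ (fun | 0 => q | t + 1 => x t) (fun | 0 => b | t + 1 => a t) (n + 1) =
      σ (q, b) + runCost σ x a n := by
  rw [runCost, sum_range_succ', add_comm]
  rfl

theorem sum_range_mul_mod {M : Type*} [AddCommMonoid M] (g : ℕ → M) (k n : ℕ) :
    ∑ t ∈ range (k * n), g (t % n) = k • ∑ t ∈ range n, g t := by
  induction k with
  | zero => simp
  | succ k ih =>
    rw [Nat.succ_mul, sum_range_add, ih, succ_nsmul]
    congr 1
    refine sum_congr rfl fun t ht => ?_
    rw [Nat.mul_comm, Nat.mul_add_mod, Nat.mod_eq_of_lt (mem_range.1 ht)]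

theorem runCost_mod (σ : Q × A → ℝ) (x : ℕ → Q) (a : ℕ → A) (k n : ℕ) :
    runCost σ (fun t => x (t % n)) (fun t => a (t % n)) (k * n) = k * runCost σ x a n := by
  rw [runCost, runCost, sum_range_mul_mod (fun t => σ (x t, a t)), nsmul_eq_mul]

theorem CostBoundedBelow.runCost_nonneg_of_cycle (hσ : CostBoundedBelow f σ) (h : IsRun f x a)
    {n : ℕ} (hcycle : x n = x 0) : 0 ≤ runCost σ x a n := by
  rcases Nat.eq_zero_or_pos n with rfl | hn
  · simp [runCost]
  by_contra! hneg
  obtain ⟨C, hC⟩ := hσ _ _ (h.mod hn hcycle)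
  obtain ⟨k, hk⟩ := exists_nat_gt (C / runCost σ x a n)
  have hkC : k * runCost σ x a n < C := (div_lt_iff_of_neg hneg).1 hk
  have hT := hC (k * n + (n - 1))
  rw [add_assoc, Nat.sub_add_cancel hn, ← Nat.succ_mul, runCost_mod] at hT
  push_cast at hT
  linarith

theorem runCost_ge_of_forall_mem
    (hcycle : ∀ x a n, IsRun f x a → x n = x 0 → 0 ≤ runCost σ x a n)
    {M : ℝ} (hM₀ : 0 ≤ M) (hM : ∀ p, -M ≤ σ p) (S : Finset Q) (h : IsRun f x a) (n : ℕ)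
    (hS : ∀ t < n, x t ∈ S) : -(#S * M) ≤ runCost σ x a n := by
  induction S using Finset.strongInduction generalizing x a n with
  | _ S ih =>
  rcases Nat.eq_zero_or_pos n with rfl | hn
  · simp only [runCost, range_zero, sum_empty, neg_nonpos]
    positivity
  classical
  set k := Nat.findGreatest (fun t => x t = x 0) (n - 1)
  have hkn : k + 1 + (n - (k + 1)) = n := by
    have := Nat.findGreatest_le (P := fun t => x t = x 0) (n - 1)
    omega
  have hloop : 0 ≤ runCost σ x a k :=
    hcycle x a k h (Nat.findGreatest_spec (P := fun t => x t = x 0) (Nat.zero_le _) rfl)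
  have hstep := hM (x k, a k)
  have hrest : -((#S - 1) * M) ≤ runCost σ (fun t => x (k + 1 + t)) (fun t => a (k + 1 + t))
      (n - (k + 1)) := by
    rw [← cast_card_erase_of_mem (hS 0 hn)]
    refine ih _ (erase_ssubset (hS 0 hn)) (h.shift (k + 1)) _ fun t ht => ?_
    refine mem_erase.2 ⟨fun hx => ?_, hS _ (by omega)⟩
    exact Nat.findGreatest_is_greatest (P := fun t => x t = x 0) (n := n - 1)
      (by omega) (by omega) hx
  have hsplit : runCost σ x a n = runCost σ x a k + σ (x k, a k) +
      runCost σ (fun t => x (k + 1 + t)) (fun t => a (k + 1 + t)) (n - (k + 1)) := by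
    conv_lhs => rw [← hkn, runCost_add, runCost_add]
    simp [runCost]
  linarith

theorem CostBoundedBelow.exists_runCost_ge [Fintype Q] [Fintype A] (hσ : CostBoundedBelow f σ) :
    ∃ B, ∀ x a n, IsRun f x a → -B ≤ runCost σ x a n := by
  set M := ∑ p, |σ p|
  have hM : ∀ p, -M ≤ σ p := fun p =>
    (neg_le_neg (single_le_sum (fun p _ => abs_nonneg (σ p)) (mem_univ p))).trans (neg_abs_le _)
  exact ⟨#(univ : Finset Q) * M, fun x a n h =>
    runCost_ge_of_forall_mem (fun x a n h hx => hσ.runCost_nonneg_of_cycle h hx)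
      (sum_nonneg fun p _ => abs_nonneg (σ p)) hM univ h n fun t _ => mem_univ _⟩

variable (f σ) in
noncomputable def availableStorage (q : Q) : ℝ :=
  sSup {c | ∃ x a n, IsRun f x a ∧ x 0 = q ∧ c = -runCost σ x a n}

theorem CostBoundedBelow.neg_runCost_le_availableStorage [Fintype Q] [Fintype A]
    (hσ : CostBoundedBelow f σ) (h : IsRun f x a) (n : ℕ) :
    -runCost σ x a n ≤ availableStorage f σ (x 0) := by
  obtain ⟨B, hB⟩ := hσ.exists_runCost_ge
  refine le_csSup ⟨B, ?_⟩ ⟨x, a, n, h, rfl, rfl⟩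
  rintro _ ⟨y, b, m, hy, -, rfl⟩
  linarith [hB y b m hy]

theorem CostBoundedBelow.availableStorage_nonneg [Fintype Q] [Fintype A] [Nonempty A]
    (hσ : CostBoundedBelow f σ) (q : Q) : 0 ≤ availableStorage f σ q := by
  obtain ⟨x, rfl, h⟩ := exists_isRun f q fun _ => Classical.arbitrary A
  simpa [runCost] using hσ.neg_runCost_le_availableStorage h 0

theorem CostBoundedBelow.availableStorage_map_sub_le [Fintype Q] [Fintype A] [Nonempty A]
    (hσ : CostBoundedBelow f σ) (p : Q × A) :
    availableStorage f σ (f p) - availableStorage f σ p.1 ≤ σ p := by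
  obtain ⟨q, b⟩ := p
  obtain ⟨x₀, hx₀, h₀⟩ := exists_isRun f (f (q, b)) fun _ => Classical.arbitrary A
  suffices availableStorage f σ (f (q, b)) ≤ σ (q, b) + availableStorage f σ q by
    dsimp only
    linarith
  refine csSup_le ⟨_, x₀, _, 0, h₀, hx₀, rfl⟩ ?_
  rintro _ ⟨x, a, n, h, hx, rfl⟩
  have := hσ.neg_runCost_le_availableStorage (h.cons b hx) (n + 1)
  rw [runCost_cons] at this
  dsimp only at this
  linarith

theorem runCost_ge_of_storage {J : Q → ℝ} (hJ₀ : ∀ q, 0 ≤ J q) (hJ : ∀ p, J (f p) - J p.1 ≤ σ p)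
    (h : IsRun f x a) (n : ℕ) : -J (x 0) ≤ runCost σ x a n := by
  have htelescope : J (x n) - J (x 0) ≤ runCost σ x a n := by
    rw [← sum_range_sub (fun t => J (x t))]
    refine sum_le_sum fun t _ => ?_
    rw [h t]
    exact hJ (x t, a t)
  linarith [hJ₀ (x n)]

theorem costBoundedBelow_iff_exists_storage [Fintype Q] [Fintype A] [Nonempty A] :
    CostBoundedBelow f σ ↔ ∃ J : Q → ℝ, (∀ q, 0 ≤ J q) ∧ ∀ p, J (f p) - J p.1 ≤ σ p :=
  ⟨fun hσ => ⟨availableStorage f σ, hσ.availableStorage_nonneg, hσ.availableStorage_map_sub_le⟩,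
    fun ⟨_, hJ₀, hJ⟩ _ _ h => ⟨_, fun T => runCost_ge_of_storage hJ₀ hJ h (T + 1)⟩⟩

end TransitionSystem

open TransitionSystem

theorem stmt_4_general {Q U W : Type*} [Fintype Q] [Fintype U] [Nonempty U]
    [Fintype W] [Nonempty W] (f : Q × U × W → Q) (σ : Q × U × W → ℝ) :
    -- (a) every trajectory, for every pair of input sequences and initial state,
    -- has partial sums of the cost bounded below
    (∀ q : ℕ → Q, ∀ u : ℕ → U, ∀ w : ℕ → W,
      (∀ t : ℕ, q (t + 1) = f (q t, u t, w t)) →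
      ∃ C : ℝ, ∀ T : ℕ, C ≤ ∑ t ∈ Finset.range (T + 1), σ (q t, u t, w t)) ↔
    -- (b) existence of a nonnegative storage function
    (∃ J : Q → ℝ, (∀ q : Q, 0 ≤ J q) ∧
      ∀ (q : Q) (u : U) (w : W), J (f (q, u, w)) - J q ≤ σ (q, u, w)) := by
  constructor
  · intro h
    obtain ⟨J, hJ₀, hJ⟩ := (costBoundedBelow_iff_exists_storage (f := f) (σ := σ)).1
      fun x a hx => h x (fun t => (a t).1) (fun t => (a t).2) hx
    exact ⟨J, hJ₀, fun q u w => hJ (q, u, w)⟩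
  · rintro ⟨J, hJ₀, hJ⟩ q u w hq
    exact (costBoundedBelow_iff_exists_storage (f := f) (σ := σ)).2
      ⟨J, hJ₀, fun p => hJ p.1 p.2.1 p.2.2⟩ q (fun t => (u t, w t)) hq

theorem stmt_4 {Q U W : Type*} [Fintype Q] [Nonempty Q] [Fintype U] [Nonempty U]
    [Fintype W] [Nonempty W] (f : Q × U × W → Q) (σ : Q × U × W → ℝ) :
    -- (a) every trajectory, for every pair of input sequences and initial state,
    -- has partial sums of the cost bounded below
    (∀ q : ℕ → Q, ∀ u : ℕ → U, ∀ w : ℕ → W,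
      (∀ t : ℕ, q (t + 1) = f (q t, u t, w t)) →
      ∃ C : ℝ, ∀ T : ℕ, C ≤ ∑ t ∈ Finset.range (T + 1), σ (q t, u t, w t)) ↔
    -- (b) existence of a nonnegative storage function
    (∃ J : Q → ℝ, (∀ q : Q, 0 ≤ J q) ∧
      ∀ (q : Q) (u : U) (w : W), J (f (q, u, w)) - J q ≤ σ (q, u, w)) :=
  stmt_4_general f σ
end

section
/- Let R, W, V̂, U be nonempty finite sets, and let ρ_S : R × W → ℝ, μ_S : V̂ × U → ℝ, ρ_Δ : U → ℝ, μ_Δ : W → ℝ. Let r : ℕ → R, w : ℕ → W, v̂ : ℕ → V̂, u : ℕ → U be sequences such that inf_{T ≥ 0} Σ_{t=0}^{T} ( ρ_S(r(t), w(t)) − μ_S(v̂(t), u(t)) ) > −∞ and inf_{T ≥ 0} Σ_{t=0}^{T} ( ρ_Δ(u(t)) − μ_Δ(w(t)) ) > −∞. Define ρ : R → ℝ by ρ(r) = max_{w ∈ W} ( ρ_S(r, w) − μ_Δ(w) ) and μ : V̂ → ℝ by μ(v̂) = min_{u ∈ U} ( μ_S(v̂, u) − ρ_Δ(u) ). Then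 inf_{T ≥ 0} Σ_{t=0}^{T} ( ρ(r(t)) − μ(v̂(t)) ) > −∞. -/
open Finset

lemma sub_le_sup'_univ_sub_inf'_univ {W U : Type*} [Fintype W] [Nonempty W] [Fintype U]
    [Nonempty U] (f : W → ℝ) (g : U → ℝ) (w : W) (u : U) :
    f w - g u ≤ univ.sup' univ_nonempty f - univ.inf' univ_nonempty g :=
  sub_le_sub (le_sup' f (mem_univ w)) (inf'_le g (mem_univ u))

lemma exists_le_sum_of_add_le {ι α : Type*} {s : ι → Finset α} {f g h : α → ℝ}
    (hf : ∃ C : ℝ, ∀ i, C ≤ ∑ a ∈ s i, f a) (hg : ∃ C : ℝ, ∀ i, C ≤ ∑ a ∈ s i, g a)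
    (hle : ∀ a, f a + g a ≤ h a) : ∃ C : ℝ, ∀ i, C ≤ ∑ a ∈ s i, h a := by
  obtain ⟨Cf, hCf⟩ := hf
  obtain ⟨Cg, hCg⟩ := hg
  refine ⟨Cf + Cg, fun i => ?_⟩
  calc Cf + Cg ≤ ∑ a ∈ s i, f a + ∑ a ∈ s i, g a := add_le_add (hCf i) (hCg i)
    _ = ∑ a ∈ s i, (f a + g a) := sum_add_distrib.symm
    _ ≤ ∑ a ∈ s i, h a := sum_le_sum fun a _ => hle a

theorem stmt_6_general {R W V U : Type*} [Fintype W] [Nonempty W]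
    [Fintype U] [Nonempty U]
    (ρS : R × W → ℝ) (μS : V × U → ℝ) (ρΔ : U → ℝ) (μΔ : W → ℝ)
    (r : ℕ → R) (w : ℕ → W) (v : ℕ → V) (u : ℕ → U)
    (hS : ∃ C : ℝ, ∀ T : ℕ,
      C ≤ ∑ t ∈ Finset.range (T + 1), (ρS (r t, w t) - μS (v t, u t)))
    (hΔ : ∃ C : ℝ, ∀ T : ℕ,
      C ≤ ∑ t ∈ Finset.range (T + 1), (ρΔ (u t) - μΔ (w t))) :
    ∃ C : ℝ, ∀ T : ℕ,
      C ≤ ∑ t ∈ Finset.range (T + 1),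
        ((univ.sup' univ_nonempty fun w' : W => ρS (r t, w') - μΔ w') -
          (univ.inf' univ_nonempty fun u' : U => μS (v t, u') - ρΔ u')) := by
  refine exists_le_sum_of_add_le hS hΔ fun t => ?_
  calc (ρS (r t, w t) - μS (v t, u t)) + (ρΔ (u t) - μΔ (w t))
      = (ρS (r t, w t) - μΔ (w t)) - (μS (v t, u t) - ρΔ (u t)) := by ring
    _ ≤ _ := sub_le_sup'_univ_sub_inf'_univ (fun w' => ρS (r t, w') - μΔ w')
        (fun u' => μS (v t, u') - ρΔ u') (w t) (u t)

theorem stmt_6 {R W V U : Type*} [Fintype R] [Nonempty R] [Fintype W] [Nonempty W]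
    [Fintype V] [Nonempty V] [Fintype U] [Nonempty U]
    (ρS : R × W → ℝ) (μS : V × U → ℝ) (ρΔ : U → ℝ) (μΔ : W → ℝ)
    (r : ℕ → R) (w : ℕ → W) (v : ℕ → V) (u : ℕ → U)
    (hS : ∃ C : ℝ, ∀ T : ℕ,
      C ≤ ∑ t ∈ Finset.range (T + 1), (ρS (r t, w t) - μS (v t, u t)))
    (hΔ : ∃ C : ℝ, ∀ T : ℕ,
      C ≤ ∑ t ∈ Finset.range (T + 1), (ρΔ (u t) - μΔ (w t))) :
    ∃ C : ℝ, ∀ T : ℕ,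
      C ≤ ∑ t ∈ Finset.range (T + 1),
        ((univ.sup' univ_nonempty fun w' : W => ρS (r t, w') - μΔ w') -
          (univ.inf' univ_nonempty fun u' : U => μS (v t, u') - ρΔ u')) :=
  stmt_6_general ρS μS ρΔ μΔ r w v u hS hΔ
end

section
/- Let R, W, V̂, U be nonempty finite sets, and let ρ_S : R × W → ℝ, μ_S : V̂ × U → ℝ, ρ_Δ : U → ℝ, μ_Δ : W → ℝ. Let τ > 0 be a real scalar. Let r : ℕ → R, w : ℕ → W, v̂ : ℕ → V̂, u : ℕ → U be sequences such that inf_{T ≥ 0} Σ_{t=0}^{T} ( ρ_S(r(t), w(t)) − μ_S(v̂(t), u(t)) ) > −∞ and inf_{T ≥ 0} Σ_{t=0}^{T} ( ρ_Δ(u(t)) − μ_Δ(w(t)) ) > −∞. Define ρ_τ : R → ℝ by ρ_τ(r) = max_{w ∈ W} ( ρ_S(r, w) − τ·μ_Δ(w) ) and μ_τ : V̂ → ℝ by μ_τ(v̂) = min_{u ∈ U} ( μ_S(v̂, u) − τ·ρ_Δ(u) ). Then inf_{T ≥ 0} Σ_{t=0}^{T} ( ρ_τ(r(t)) − μ_τ(v̂(t))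 ) > −∞. -/
/-!
Along the closed loop, the supply of `S` plus `τ` times the supply of `Δ` has partial sums
bounded below. At each instant it is dominated by `ρ_τ(r t) - μ_τ(v̂ t)`, because `ρ_τ`
maximises over the actual `w t` and `μ_τ` minimises over the actual `u t`.
-/

open Finset

def PartialSumsBddBelow (f : ℕ → ℝ) : Prop :=
  ∃ C : ℝ, ∀ T : ℕ, C ≤ ∑ t ∈ range (T + 1), f t

namespace PartialSumsBddBelow

variable {f g : ℕ → ℝ}

theorem add (hf : PartialSumsBddBelow f) (hg : PartialSumsBddBelow g) :
    PartialSumsBddBelow fun t => f t + g t := by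
  obtain ⟨C, hC⟩ := hf
  obtain ⟨D, hD⟩ := hg
  exact ⟨C + D, fun T => by rw [sum_add_distrib]; exact add_le_add (hC T) (hD T)⟩

theorem const_mul (hf : PartialSumsBddBelow f) {c : ℝ} (hc : 0 ≤ c) :
    PartialSumsBddBelow fun t => c * f t := by
  obtain ⟨C, hC⟩ := hf
  exact ⟨c * C, fun T => by rw [← mul_sum]; exact mul_le_mul_of_nonneg_left (hC T) hc⟩

theorem mono (hf : PartialSumsBddBelow f) (hfg : ∀ t, f t ≤ g t) :
    PartialSumsBddBelow g := by
  obtain ⟨C, hC⟩ := hf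
  exact ⟨C, fun T => (hC T).trans (sum_le_sum fun t _ => hfg t)⟩

end PartialSumsBddBelow

theorem sub_add_mul_sub_le_sup'_sub_inf' {W U : Type*} [Fintype W] [Nonempty W]
    [Fintype U] [Nonempty U] (ρS : W → ℝ) (μS : U → ℝ) (ρΔ : U → ℝ) (μΔ : W → ℝ)
    (τ : ℝ) (w₀ : W) (u₀ : U) :
    ρS w₀ - μS u₀ + τ * (ρΔ u₀ - μΔ w₀) ≤
      (univ.sup' univ_nonempty fun w => ρS w - τ * μΔ w) -
        univ.inf' univ_nonempty fun u => μS u - τ * ρΔ u := by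
  have hw := le_sup' (fun w => ρS w - τ * μΔ w) (mem_univ w₀)
  have hu := inf'_le (fun u => μS u - τ * ρΔ u) (mem_univ u₀)
  linarith

theorem stmt_7_general {R W V U : Type*} [Fintype W] [Nonempty W]
    [Fintype U] [Nonempty U]
    (ρS : R × W → ℝ) (μS : V × U → ℝ) (ρΔ : U → ℝ) (μΔ : W → ℝ)
    (τ : ℝ) (hτ : 0 < τ)
    (r : ℕ → R) (w : ℕ → W) (v : ℕ → V) (u : ℕ → U)
    (hS : ∃ C : ℝ, ∀ T : ℕ,
      C ≤ ∑ t ∈ Finset.range (T + 1), (ρS (r t, w t) - μS (v t, u t)))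
    (hΔ : ∃ C : ℝ, ∀ T : ℕ,
      C ≤ ∑ t ∈ Finset.range (T + 1), (ρΔ (u t) - μΔ (w t))) :
    ∃ C : ℝ, ∀ T : ℕ,
      C ≤ ∑ t ∈ Finset.range (T + 1),
        ((univ.sup' univ_nonempty fun w' : W => ρS (r t, w') - τ * μΔ w') -
          (univ.inf' univ_nonempty fun u' : U => μS (v t, u') - τ * ρΔ u')) :=
  PartialSumsBddBelow.mono (PartialSumsBddBelow.add hS (PartialSumsBddBelow.const_mul hΔ hτ.le))
    fun t => sub_add_mul_sub_le_sup'_sub_inf' (fun w' => ρS (r t, w')) (fun u' => μS (v t, u'))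
      ρΔ μΔ τ (w t) (u t)

theorem stmt_7 {R W V U : Type*} [Fintype R] [Nonempty R] [Fintype W] [Nonempty W]
    [Fintype V] [Nonempty V] [Fintype U] [Nonempty U]
    (ρS : R × W → ℝ) (μS : V × U → ℝ) (ρΔ : U → ℝ) (μΔ : W → ℝ)
    (τ : ℝ) (hτ : 0 < τ)
    (r : ℕ → R) (w : ℕ → W) (v : ℕ → V) (u : ℕ → U)
    (hS : ∃ C : ℝ, ∀ T : ℕ,
      C ≤ ∑ t ∈ Finset.range (T + 1), (ρS (r t, w t) - μS (v t, u t)))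
    (hΔ : ∃ C : ℝ, ∀ T : ℕ,
      C ≤ ∑ t ∈ Finset.range (T + 1), (ρΔ (u t) - μΔ (w t))) :
    ∃ C : ℝ, ∀ T : ℕ,
      C ≤ ∑ t ∈ Finset.range (T + 1),
        ((univ.sup' univ_nonempty fun w' : W => ρS (r t, w') - τ * μΔ w') -
          (univ.inf' univ_nonempty fun u' : U => μS (v t, u') - τ * ρΔ u')) :=
  stmt_7_general ρS μS ρΔ μΔ τ hτ r w v u hS hΔ
end
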